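/- arXiv:2507.00235 — 6 statements merged into one kernel-verified Lean document; each statement's English description precedes it below -/
import Mathlib

section
/- Every selective subset M of (G,C) contains at least one vertex from each block: for every block B of (G,C), M ∩ B ≠ ∅. -/
/-- The set of nearest neighbors of `v` in `U` with respect to hop-distance in `G`:
`N̂(v,U) = {u ∈ U : d(v,u) = min_{w ∈ U} d(v,w)}` (empty if `U` is empty). -/
def NearestSet {V : Type*} (G : SimpleGraph V) (v : V) (U : Set V) : Set V :=
  {u | u ∈ U ∧ ∀ w ∈ U, G.dist v u ≤ G.dist v w}

/-- `S` is a selective subset of `(G, C)`: every vertex `v` has, among its nearest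
neighbors in `S ∪ (V ∖ V_{C v})`, at least one vertex of its own color. -/
def IsSelective {V α : Type*} (G : SimpleGraph V) (C : V → α) (S : Set V) : Prop :=
  ∀ v : V, ∃ u ∈ NearestSet G v (S ∪ {w | C w ≠ C v}), C u = C v

/-- The subgraph of `G` keeping only edges between vertices of the same color. -/
def sameColorGraph {V α : Type*} (G : SimpleGraph V) (C : V → α) : SimpleGraph V where
  Adj u w := G.Adj u w ∧ C u = C w
  symm := ⟨fun _ _ h => ⟨h.1.symm, h.2.symm⟩⟩
  loopless := ⟨fun u h => G.loopless.irrefl u h.1⟩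

/-- A block of `(G, C)` is a maximal monochromatic connected set of vertices, i.e. a
connected component of the subgraph induced by one color class. -/
def IsBlock {V α : Type*} (G : SimpleGraph V) (C : V → α) (B : Set V) : Prop :=
  ∃ v : V, B = {u | (sameColorGraph G C).Reachable u v}

/-! A vertex `v` has a nearest vertex `u` of its own color in `M ∪ (V ∖ V_{C v})`, so `u ∈ M`.
A shortest walk from `v` to `u` meets `M ∪ (V ∖ V_{C v})` only at its end, since every earlier
vertex is strictly closer to `v` than `u`; hence the walk is monochromatic and `u` lies in the
block of `v`. -/

namespace SimpleGraph

variable {V α : Type*} {G : SimpleGraph V}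

theorem Walk.reachable_sameColorGraph {C : V → α} {k : α} {a b : V} (p : G.Walk a b)
    (hp : ∀ w ∈ p.support, C w = k) : (sameColorGraph G C).Reachable a b := by
  induction p with
  | nil => rfl
  | @cons a c b hadj p ih =>
    have hcolor : C a = C c := (hp a (by simp)).trans (hp c (by simp)).symm
    exact (Adj.reachable (G := sameColorGraph G C) ⟨hadj, hcolor⟩).trans
      (ih fun w hw => hp w (by simp [hw]))

theorem Walk.eq_of_mem_support_of_mem_nearestSet [DecidableEq V] {U : Set V} {v u w : V} (p : G.Walk v u)
    (hp : p.length = G.dist v u) (hu : u ∈ NearestSet G v U) (hw : w ∈ p.support)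
    (hwU : w ∈ U) : w = u := by
  have hsplit : (p.takeUntil w hw).length + (p.dropUntil w hw).length = p.length := by
    rw [← Walk.length_append, p.take_spec hw]
  have hfar : G.dist v u ≤ G.dist v w := hu.2 w hwU
  have hnear : G.dist v w ≤ (p.takeUntil w hw).length := dist_le _
  exact (p.dropUntil w hw).eq_of_length_eq_zero (by omega)

end SimpleGraph

theorem stmt_2_general {V : Type*} {c : ℕ} (G : SimpleGraph V) (hconn : G.Connected)
    (C : V → Fin c) (M : Set V) (hM : IsSelective G C M) :
    ∀ B : Set V, IsBlock G C B → (M ∩ B).Nonempty := by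
  classical
  rintro B ⟨v, rfl⟩
  obtain ⟨u, hu, hcu⟩ := hM v
  have huM : u ∈ M := hu.1.resolve_right (not_not.2 hcu)
  obtain ⟨p, hp⟩ := hconn.exists_walk_length_eq_dist v u
  have hmono : ∀ w ∈ p.support, C w = C v := fun w hw => by
    by_contra hne
    exact hne (p.eq_of_mem_support_of_mem_nearestSet hp hu hw (Or.inr hne) ▸ hcu)
  exact ⟨u, huM, (p.reachable_sameColorGraph hmono).symm⟩

/-- Every selective subset `M` of `(G,C)` contains at least one vertex from each block. -/
theorem stmt_2 {V : Type*} [Fintype V] {c : ℕ} (G : SimpleGraph V) (hconn : G.Connected)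
    (C : V → Fin c) (M : Set V) (hM : IsSelective G C M) :
    ∀ B : Set V, IsBlock G C B → (M ∩ B).Nonempty :=
  stmt_2_general G hconn C M hM
end

section
/- If (G,C) has exactly k distinct blocks, then every selective subset of (G,C) has cardinality at least k. -/
/-!
Let `u` be a nearest vertex to `v` in `S ∪ (V ∖ V_{C v})` with `C u = C v`. Every vertex of a
shortest `v`–`u` path other than `u` is strictly closer to `v` than `u`, so it has color `C v`;
thus `u` lies in the block of `v`. Hence every block meets `S`, and `u ↦ block of u` maps `S`
onto the set of blocks.
-/

open SimpleGraph

section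

variable {V α : Type*} {G : SimpleGraph V} {C : V → α}

lemma color_eq_of_forall_dist_le {v u : V} (hr : G.Reachable v u)
    (h : ∀ w, C w ≠ C u → G.dist v u ≤ G.dist v w) : C v = C u := by
  by_contra hne
  have hvu : G.dist v u = 0 := Nat.le_zero.mp (by simpa using h v hne)
  exact hne (congrArg C (hr.dist_eq_zero_iff.mp hvu))

lemma sameColorGraph_reachable_of_length_eq_dist {v u : V} (p : G.Walk v u)
    (hp : p.length = G.dist v u) (h : ∀ w, C w ≠ C u → G.dist v u ≤ G.dist v w) :
    (sameColorGraph G C).Reachable v u := by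
  induction p with
  | nil => rfl
  | @cons v x u hadj q ih =>
    have hvx : G.dist v x = 1 := dist_eq_one_iff_adj.mpr hadj
    have hvx_tri : ∀ w, G.dist v w ≤ 1 + G.dist x w := fun w =>
      hvx ▸ hadj.reachable.dist_triangle_left w
    simp only [Walk.length_cons] at hp
    have hq : q.length = G.dist x u := by
      have := G.dist_le q
      have := hvx_tri u
      omega
    have hx : ∀ w, C w ≠ C u → G.dist x u ≤ G.dist x w := fun w hw => by
      have := h w hw
      have := hvx_tri w
      omega
    have hCv := color_eq_of_forall_dist_le (hadj.reachable.trans q.reachable) h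
    have hCx := color_eq_of_forall_dist_le q.reachable hx
    exact Adj.reachable (G := sameColorGraph G C) ⟨hadj, hCv.trans hCx.symm⟩ |>.trans (ih hq hx)

lemma SimpleGraph.Reachable.sameColorGraph_of_forall_dist_le {v u : V} (hr : G.Reachable v u)
    (h : ∀ w, C w ≠ C u → G.dist v u ≤ G.dist v w) : (sameColorGraph G C).Reachable v u :=
  let ⟨p, hp⟩ := hr.exists_walk_length_eq_dist
  sameColorGraph_reachable_of_length_eq_dist p hp h

lemma IsSelective.exists_mem_reachable (hconn : G.Connected) {S : Set V}
    (hS : IsSelective G C S) (v : V) : ∃ u ∈ S, (sameColorGraph G C).Reachable u v := by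
  obtain ⟨u, ⟨huU, hmin⟩, hCu⟩ := hS v
  have huS : u ∈ S := huU.resolve_right (not_not.mpr hCu)
  refine ⟨u, huS, Reachable.symm ?_⟩
  exact (hconn v u).sameColorGraph_of_forall_dist_le fun w hw => hmin w (Or.inr (hCu ▸ hw))

lemma IsSelective.setOf_isBlock_subset_image (hconn : G.Connected) {S : Set V}
    (hS : IsSelective G C S) :
    {B | IsBlock G C B} ⊆ (fun u => {w | (sameColorGraph G C).Reachable w u}) '' S := by
  rintro B ⟨v, rfl⟩
  obtain ⟨u, huS, huv⟩ := hS.exists_mem_reachable hconn v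
  exact ⟨u, huS, Set.ext fun w => ⟨fun hwu => hwu.trans huv, fun hwv => hwv.trans huv.symm⟩⟩

end

/-- If `(G,C)` has exactly `k` distinct blocks, then every selective subset of `(G,C)`
has cardinality at least `k`. -/
theorem stmt_3 {V : Type*} [Fintype V] {c : ℕ} (G : SimpleGraph V) (hconn : G.Connected)
    (C : V → Fin c) (k : ℕ) (hk : {B : Set V | IsBlock G C B}.ncard = k)
    (S : Set V) (hS : IsSelective G C S) :
    k ≤ S.ncard := by
  subst hk
  calc {B : Set V | IsBlock G C B}.ncard
      ≤ ((fun u => {w | (sameColorGraph G C).Reachable w u}) '' S).ncard :=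
        Set.ncard_le_ncard (hS.setOf_isBlock_subset_image hconn)
    _ ≤ S.ncard := Set.ncard_image_le
end

section
/- Blocks are independent in any selective subset: if M is a selective subset of (G,C) and v is a vertex lying in block B with ℓ = C(v), then there exists a vertex u ∈ M ∩ B with C(u) = C(v) and d(v,u) = min_{w ∈ M ∪ (V ∖ V_ℓ)} d(v,w); that is, some nearest same-colored witness for v can always be chosen inside v's own block. -/
/-!
Take a nearest same-colored witness `u` for `v`, which exists by selectivity. Every vertex on
a shortest path from `v` to `u`, other than `u`, is strictly closer to `v` than `u`, so it
cannot carry another color; hence the path stays monochromatic and `u` lies in `v`'s block.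
-/

namespace SimpleGraph

variable {V : Type*} {G : SimpleGraph V} {u v : V}

lemma Reachable.exists_adj_dist_lt (hr : G.Reachable v u) (hne : v ≠ u) :
    ∃ x, G.Reachable v x ∧ G.Adj x u ∧ G.dist v x < G.dist v u := by
  obtain ⟨p, hp⟩ := hr.symm.exists_walk_length_eq_dist
  cases p with
  | nil => exact absurd rfl hne
  | cons hadj q =>
    refine ⟨_, q.reverse.reachable, hadj.symm, ?_⟩
    have hq : G.dist v _ ≤ q.length := dist_comm (G := G) ▸ dist_le q
    have hvu : G.dist v u = q.length + 1 := by rw [dist_comm, ← hp, Walk.length_cons]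
    omega

end SimpleGraph

open SimpleGraph

lemma sameColorGraph_reachable_of_dist_le {V α : Type*} {G : SimpleGraph V} {C : V → α}
    {v u : V} (hr : G.Reachable v u) (hc : C u = C v)
    (hmin : ∀ w, C w ≠ C v → G.dist v u ≤ G.dist v w) :
    (sameColorGraph G C).Reachable v u := by
  induction hd : G.dist v u using Nat.strong_induction_on generalizing u with
  | _ n ih =>
    by_cases hvu : v = u
    · exact hvu ▸ Reachable.refl v
    obtain ⟨x, hrx, hxu, hlt⟩ := hr.exists_adj_dist_lt hvu
    have hcx : C x = C v := by
      by_contra hne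
      exact absurd (hmin x hne) (not_le.mpr hlt)
    have hvx := ih _ (hd ▸ hlt) hrx hcx (fun w hw => hlt.le.trans (hmin w hw)) rfl
    exact hvx.trans (Adj.reachable (G := sameColorGraph G C) ⟨hxu, hcx.trans hc.symm⟩)

theorem stmt_5_general {V : Type*} {c : ℕ} (G : SimpleGraph V) (hconn : G.Connected)
    (C : V → Fin c) (M : Set V) (hM : IsSelective G C M)
    (B : Set V) (hB : IsBlock G C B) (v : V) (hv : v ∈ B) :
    ∃ u : V, u ∈ M ∩ B ∧ C u = C v ∧
      u ∈ NearestSet G v (M ∪ {w | C w ≠ C v}) := by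
  obtain ⟨u, hu, hcu⟩ := hM v
  have huM : u ∈ M := hu.1.resolve_right (not_not_intro hcu)
  have hvu : (sameColorGraph G C).Reachable v u :=
    sameColorGraph_reachable_of_dist_le (hconn v u) hcu fun w hw => hu.2 w (Or.inr hw)
  obtain ⟨v₀, rfl⟩ := hB
  exact ⟨u, ⟨huM, hvu.symm.trans hv⟩, hcu, hu⟩

/-- Blocks are independent in any selective subset: if `M` is selective and `v` lies in
block `B`, then some vertex `u ∈ M ∩ B` of the same color as `v` is a nearest neighbor of
`v` in `M ∪ (V ∖ V_{C v})`. -/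
theorem stmt_5 {V : Type*} [Fintype V] {c : ℕ} (G : SimpleGraph V) (hconn : G.Connected)
    (C : V → Fin c) (M : Set V) (hM : IsSelective G C M)
    (B : Set V) (hB : IsBlock G C B) (v : V) (hv : v ∈ B) :
    ∃ u : V, u ∈ M ∩ B ∧ C u = C v ∧
      u ∈ NearestSet G v (M ∪ {w | C w ≠ C v}) :=
  stmt_5_general G hconn C M hM B hB v hv
end

section
/- Assume C takes at least two distinct values on V. If S ⊆ V is such that every boundary vertex a satisfies a ∈ S or there exists a neighbor u of a with C(u) = C(a) and u ∈ S, then S is a selective subset of (G,C). -/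
/-- A boundary vertex: adjacent in `G` to at least one vertex of a different color. -/
def IsBoundary {V α : Type*} (G : SimpleGraph V) (C : V → α) (a : V) : Prop :=
  ∃ b : V, G.Adj a b ∧ C b ≠ C a

/-- If `C` takes at least two values and every boundary vertex `a` is in `S` or has a
neighbor of its own color in `S`, then `S` is a selective subset. -/
theorem stmt_7 {V : Type*} [Fintype V] {c : ℕ} (G : SimpleGraph V) (hconn : G.Connected)
    (C : V → Fin c) (hc2 : ∃ a b : V, C a ≠ C b) (S : Set V)
    (h : ∀ a : V, IsBoundary G C a →
      a ∈ S ∨ ∃ u : V, G.Adj a u ∧ C u = C a ∧ u ∈ S) :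
    IsSelective G C S := by
  intro v
  set U : Set V := S ∪ {w | C w ≠ C v} with hU
  -- U is nonempty
  have hUne : U.Nonempty := by
    obtain ⟨a, b, hab⟩ := hc2
    by_cases hav : C a = C v
    · exact ⟨b, Or.inr (by simp [hav ▸ hab.symm])⟩
    · exact ⟨a, Or.inr hav⟩
  obtain ⟨u, huU, humin⟩ := Set.exists_min_image U (fun w => G.dist v w) (Set.toFinite U) hUne
  by_cases hcu : C u = C v
  · exact ⟨u, ⟨huU, humin⟩, hcu⟩
  -- u has a different color; find predecessor a on a shortest path from v to u
  have hvu : v ≠ u := fun he => hcu (he ▸ rfl)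
  have hreach : G.Reachable u v := hconn u v
  obtain ⟨q, hq⟩ := hreach.exists_walk_length_eq_dist
  have hpos : 0 < G.dist u v := hconn.pos_dist_of_ne (Ne.symm hvu)
  cases q with
  | nil => simp at hq; omega
  | cons hadj q' =>
    rename_i a
    -- hadj : G.Adj u a, q' : G.Walk a v
    have hq'len : q'.length = G.dist u v - 1 := by
      simp [SimpleGraph.Walk.length_cons] at hq; omega
    have hdva : G.dist v a ≤ G.dist u v - 1 := by
      calc G.dist v a = G.dist a v := G.dist_comm
        _ ≤ q'.length := SimpleGraph.dist_le q'
        _ = G.dist u v - 1 := hq'len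
    have hduv : G.dist u v = G.dist v u := G.dist_comm
    have haU : a ∉ U := by
      intro haU
      have := humin a haU
      omega
    have haC : C a = C v := by
      by_contra hne
      exact haU (Or.inr hne)
    have haS : a ∉ S := fun hs => haU (Or.inl hs)
    have hbd : IsBoundary G C a := ⟨u, hadj.symm, by rw [haC]; exact hcu⟩
    rcases h a hbd with hin | ⟨u', hadj', hCu', hu'S⟩
    · exact absurd hin haS
    · refine ⟨u', ⟨Or.inl hu'S, ?_⟩, hCu'.trans haC⟩
      intro w hw
      have h1 : G.dist v u' ≤ G.dist v a + G.dist a u' :=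
        hconn.dist_triangle
      have h2 : G.dist a u' ≤ 1 := by
        simpa using SimpleGraph.dist_le hadj'.toWalk
      have h3 : G.dist v u ≤ G.dist v w := humin w hw
      omega
end

section
/- Assume C takes at least two distinct values on V. The minimum cardinality of a selective subset of (G,C) equals the minimum cardinality of a set S ⊆ V such that every boundary vertex a satisfies a ∈ S or some neighbor u of a with C(u) = C(a) lies in S (i.e., the minimum selective subset problem coincides with this covering problem on boundary vertices). -/
lemma selective_iff_cover {V : Type*} [Fintype V] {c : ℕ} (G : SimpleGraph V)
    (hconn : G.Connected) (C : V → Fin c) (hc2 : ∃ a b : V, C a ≠ C b) (S : Set V) :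
    IsSelective G C S ↔
      (∀ a : V, IsBoundary G C a →
        a ∈ S ∨ ∃ u : V, G.Adj a u ∧ C u = C a ∧ u ∈ S) := by
  constructor
  · intro hsel a ⟨b, hab, hcb⟩
    obtain ⟨u, ⟨huT, hmin⟩, hcu⟩ := hsel a
    have huS : u ∈ S := by
      rcases huT with h | h
      · exact h
      · exact absurd hcu h
    by_cases hua : u = a
    · exact Or.inl (hua ▸ huS)
    · refine Or.inr ⟨u, ?_, hcu, huS⟩
      have h1 : G.dist a u ≤ G.dist a b := hmin b (Or.inr hcb)
      rw [SimpleGraph.dist_eq_one_iff_adj.mpr hab] at h1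
      have h2 : 0 < G.dist a u := hconn.pos_dist_of_ne (Ne.symm hua)
      exact SimpleGraph.dist_eq_one_iff_adj.mp (le_antisymm h1 h2)
  · intro hcov v
    set T : Set V := S ∪ {w | C w ≠ C v} with hT
    have hTne : T.Nonempty := by
      obtain ⟨a, b, hab⟩ := hc2
      by_cases ha : C a = C v
      · exact ⟨b, Or.inr (fun hb => hab (ha.trans hb.symm))⟩
      · exact ⟨a, Or.inr ha⟩
    obtain ⟨u, huT, hmin⟩ := Set.exists_min_image T (G.dist v) (Set.toFinite T) hTne
    by_cases hcu : C u = C v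
    · exact ⟨u, ⟨huT, hmin⟩, hcu⟩
    · have hd : G.dist v u ≠ 0 := by
        intro h0
        exact hcu (hconn.dist_eq_zero_iff.mp h0 ▸ rfl)
      obtain ⟨p, hp⟩ := SimpleGraph.exists_walk_of_dist_ne_zero hd
      set q := p.reverse with hq
      have hql : q.length = G.dist v u := by rw [hq, SimpleGraph.Walk.length_reverse, hp]
      have hnil : ¬ q.Nil := by
        rw [SimpleGraph.Walk.not_nil_iff_lt_length, hql]
        exact Nat.pos_of_ne_zero hd
      set x := q.getVert 1 with hx
      have hadjux : G.Adj u x := q.adj_snd hnil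
      have hdx : G.dist v x ≤ G.dist v u - 1 := by
        rw [SimpleGraph.dist_comm]
        calc G.dist x v ≤ q.tail.length := SimpleGraph.dist_le q.tail
          _ = G.dist v u - 1 := by
            have := SimpleGraph.Walk.length_tail_add_one hnil
            omega
      have hxT : x ∉ T := by
        intro hxmem
        have := hmin x hxmem
        omega
      have hcx : C x = C v := by
        by_contra h
        exact hxT (Or.inr h)
      have hxS : x ∉ S := fun h => hxT (Or.inl h)
      rcases hcov x ⟨u, hadjux.symm, fun h => hcu (h.trans hcx)⟩ with h | ⟨w, hxw, hcw, hwS⟩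
      · exact absurd h hxS
      · have hdw : G.dist v w ≤ G.dist v u := by
          calc G.dist v w ≤ G.dist v x + G.dist x w := hconn.dist_triangle
            _ ≤ (G.dist v u - 1) + 1 := by
                have : G.dist x w = 1 := SimpleGraph.dist_eq_one_iff_adj.mpr hxw
                omega
            _ ≤ G.dist v u := by
                have : G.dist v u ≠ 0 := hd
                omega
        exact ⟨w, ⟨Or.inl hwS, fun b hb => le_trans hdw (hmin b hb)⟩, hcw.trans hcx⟩

/-- If `C` takes at least two values, the minimum cardinality of a selective subset equals
the minimum cardinality of a set `S` such that every boundary vertex is in `S` or has a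
same-colored neighbor in `S`. -/
theorem stmt_9 {V : Type*} [Fintype V] {c : ℕ} (G : SimpleGraph V) (hconn : G.Connected)
    (C : V → Fin c) (hc2 : ∃ a b : V, C a ≠ C b) :
    sInf {n : ℕ | ∃ S : Set V, IsSelective G C S ∧ S.ncard = n} =
      sInf {n : ℕ | ∃ S : Set V,
        (∀ a : V, IsBoundary G C a →
          a ∈ S ∨ ∃ u : V, G.Adj a u ∧ C u = C a ∧ u ∈ S) ∧ S.ncard = n} := by
  congr 1
  ext n
  exact exists_congr fun S => and_congr_left' (selective_iff_cover G hconn C hc2 S)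
end

section
/- Assume C takes at least two distinct values on V. Then there exists a minimum selective subset M of (G,C) such that every vertex of M is either a boundary vertex or is adjacent to a boundary vertex of its own color; that is, M ⊆ B^all, where B^all is the union over all blocks B of the boundary vertices of B together with their same-colored neighbors. -/
/-- Distance from `v` to the nearest vertex of a different color. -/
noncomputable def dOne {V : Type*} {c : ℕ} (G : SimpleGraph V) (C : V → Fin c) (v : V) : ℕ :=
  sInf ((G.dist v) '' {w | C w ≠ C v})

section Aux

variable {V : Type*} {c : ℕ}

lemma exists_diff {C : V → Fin c} (hc2 : ∃ a b : V, C a ≠ C b) (v : V) :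
    ∃ w, C w ≠ C v := by
  obtain ⟨a, b, hab⟩ := hc2
  by_cases h : C a = C v
  · exact ⟨b, fun hb => hab (h ▸ hb ▸ rfl)⟩
  · exact ⟨a, h⟩

lemma dOne_le (G : SimpleGraph V) (C : V → Fin c) {v w : V} (hw : C w ≠ C v) :
    dOne G C v ≤ G.dist v w :=
  Nat.sInf_le ⟨w, hw, rfl⟩

lemma dOne_spec (G : SimpleGraph V) (C : V → Fin c) (hc2 : ∃ a b : V, C a ≠ C b) (v : V) :
    ∃ w, C w ≠ C v ∧ G.dist v w = dOne G C v := by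
  obtain ⟨w, hw⟩ := exists_diff hc2 v
  have hmem : dOne G C v ∈ (G.dist v) '' {w | C w ≠ C v} := Nat.sInf_mem ⟨_, ⟨w, hw, rfl⟩⟩
  obtain ⟨u, hu, hd⟩ := hmem
  exact ⟨u, hu, hd⟩

lemma dOne_pos (G : SimpleGraph V) (C : V → Fin c) (hconn : G.Connected)
    (hc2 : ∃ a b : V, C a ≠ C b) (v : V) : 1 ≤ dOne G C v := by
  obtain ⟨w, hw, hd⟩ := dOne_spec G C hc2 v
  have hne : v ≠ w := fun h => hw (h ▸ rfl)
  have hpos := hconn.pos_dist_of_ne hne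
  exact hd ▸ hpos

lemma dOne_boundary_le (G : SimpleGraph V) (C : V → Fin c) {v : V} (hb : IsBoundary G C v) :
    dOne G C v ≤ 1 := by
  obtain ⟨b, hadj, hcb⟩ := hb
  have h1 : G.dist v b ≤ 1 := by
    simpa using SimpleGraph.dist_le (SimpleGraph.Walk.cons hadj SimpleGraph.Walk.nil)
  exact le_trans (dOne_le G C hcb) h1

/-- Selectivity in terms of "servers". -/
lemma isSelective_iff (G : SimpleGraph V) (C : V → Fin c) (hc2 : ∃ a b : V, C a ≠ C b)
    (S : Set V) :
    IsSelective G C S ↔ ∀ v : V, ∃ u ∈ S, C u = C v ∧ G.dist v u ≤ dOne G C v := by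
  constructor
  · intro hsel v
    obtain ⟨u, ⟨huU, hmin⟩, hcu⟩ := hsel v
    have huS : u ∈ S := by
      rcases huU with h | h
      · exact h
      · exact absurd hcu h
    obtain ⟨w, hw, hd⟩ := dOne_spec G C hc2 v
    exact ⟨u, huS, hcu, hd ▸ hmin w (Or.inr hw)⟩
  · intro hserve v
    obtain ⟨u0, hu0S, hcu0, hdu0⟩ := hserve v
    -- take a nearest same-colored element of S
    have hne : (G.dist v '' {u | u ∈ S ∧ C u = C v}).Nonempty := ⟨_, ⟨u0, ⟨hu0S, hcu0⟩, rfl⟩⟩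
    obtain ⟨u, ⟨huS, hcu⟩, hdu⟩ := Nat.sInf_mem hne
    refine ⟨u, ⟨Or.inl huS, ?_⟩, hcu⟩
    intro w hw
    have h2 : sInf (G.dist v '' {u | u ∈ S ∧ C u = C v}) ≤ G.dist v u0 :=
      Nat.sInf_le ⟨u0, ⟨hu0S, hcu0⟩, rfl⟩
    rcases hw with hwS | hwd
    · by_cases hcw : C w = C v
      · have h3 : sInf (G.dist v '' {u | u ∈ S ∧ C u = C v}) ≤ G.dist v w :=
          Nat.sInf_le ⟨w, ⟨hwS, hcw⟩, rfl⟩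
        omega
      · have h1 : dOne G C v ≤ G.dist v w := dOne_le G C hcw
        omega
    · have h1 : dOne G C v ≤ G.dist v w := dOne_le G C hwd
      omega

/-- Every vertex has a same-colored boundary vertex strictly within its `dOne`-radius. -/
lemma exists_boundary (G : SimpleGraph V) (C : V → Fin c) (hconn : G.Connected)
    (hc2 : ∃ a b : V, C a ≠ C b) (v : V) :
    ∃ y, C y = C v ∧ IsBoundary G C y ∧ G.dist v y + 1 ≤ dOne G C v := by
  suffices H : ∀ n v, dOne G C v = n →
      ∃ y, C y = C v ∧ IsBoundary G C y ∧ G.dist v y + 1 ≤ dOne G C v from H _ v rfl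
  intro n
  induction n using Nat.strong_induction_on with
  | _ n ih =>
    intro v hn
    obtain ⟨w, hw, hdw⟩ := dOne_spec G C hc2 v
    have hpos : 1 ≤ dOne G C v := dOne_pos G C hconn hc2 v
    have hdwn : G.dist v w = n := by rw [hdw, hn]
    have hposn : 1 ≤ n := hn ▸ hpos
    obtain ⟨p, hp⟩ := hconn.exists_walk_length_eq_dist v w
    cases p with
    | nil =>
      rw [SimpleGraph.dist_self] at hdwn
      omega
    | @cons _ v' _ hadj q =>
      by_cases hcv' : C v' = C v
      · -- recurse from v'
        have hq : q.length + 1 = n := by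
          rw [← hdwn, ← hp, SimpleGraph.Walk.length_cons]
        have hlt : dOne G C v' < n := by
          have h1 : dOne G C v' ≤ G.dist v' w := dOne_le G C (fun h => hw (hcv' ▸ h))
          have h2 : G.dist v' w ≤ q.length := SimpleGraph.dist_le q
          omega
        obtain ⟨y, hcy, hby, hdy⟩ := ih _ hlt v' rfl
        have hdvv' : G.dist v v' ≤ 1 := by
          simpa using SimpleGraph.dist_le (SimpleGraph.Walk.cons hadj SimpleGraph.Walk.nil)
        have htri : G.dist v y ≤ G.dist v v' + G.dist v' y := hconn.dist_triangle
        refine ⟨y, hcy.trans hcv', hby, ?_⟩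
        rw [hn]
        omega
      · -- v itself is a boundary vertex
        refine ⟨v, rfl, ⟨v', hadj, hcv'⟩, by simpa [SimpleGraph.dist_self] using hpos⟩

end Aux

/-- If `C` takes at least two values, then there is a minimum selective subset `M` all of
whose vertices are boundary vertices or adjacent to a boundary vertex of their own color
(i.e. `M ⊆ B^all`). -/
theorem stmt_10 {V : Type*} [Fintype V] {c : ℕ} (G : SimpleGraph V) (hconn : G.Connected)
    (C : V → Fin c) (hc2 : ∃ a b : V, C a ≠ C b) :
    ∃ M : Set V, IsSelective G C M ∧
      (∀ S : Set V, IsSelective G C S → M.ncard ≤ S.ncard) ∧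
      M ⊆ {u : V | IsBoundary G C u ∨
        ∃ a : V, G.Adj u a ∧ C a = C u ∧ IsBoundary G C a} := by
  classical
  have huniv : IsSelective G C (Set.univ : Set V) := by
    intro v
    refine ⟨v, ⟨Or.inl (Set.mem_univ v), ?_⟩, rfl⟩
    intro w _
    simp [SimpleGraph.dist_self]
  have hsne : {n : ℕ | ∃ S : Set V, IsSelective G C S ∧ S.ncard = n}.Nonempty :=
    ⟨_, Set.univ, huniv, rfl⟩
  obtain ⟨M, hMsel, hMcard⟩ := Nat.sInf_mem hsne
  have hmin : ∀ S : Set V, IsSelective G C S → M.ncard ≤ S.ncard := by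
    intro S hS
    have h1 : sInf {n : ℕ | ∃ S : Set V, IsSelective G C S ∧ S.ncard = n} ≤ S.ncard :=
      Nat.sInf_le ⟨S, hS, rfl⟩
    omega
  refine ⟨M, hMsel, hmin, ?_⟩
  intro m hmM
  by_contra hB
  simp only [Set.mem_setOf_eq] at hB
  push_neg at hB
  obtain ⟨hB1, hB2⟩ := hB
  -- M \ {m} is still selective
  have hsel' : IsSelective G C (M \ {m}) := by
    rw [isSelective_iff G C hc2]
    intro v
    obtain ⟨y, hcy, hby, hdvy⟩ := exists_boundary G C hconn hc2 v
    -- a server of y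
    obtain ⟨u, huM, hcu, hdu⟩ := (isSelective_iff G C hc2 M).mp hMsel y
    have hduy : G.dist y u ≤ 1 := le_trans hdu (dOne_boundary_le G C hby)
    have hunm : u ≠ m := by
      intro he
      subst he
      interval_cases h : G.dist y u
      · have hyu : y = u := by
          by_contra hne
          have := hconn.pos_dist_of_ne hne
          omega
        exact hB1 (hyu ▸ hby)
      · have hadj : G.Adj y u := SimpleGraph.dist_eq_one_iff_adj.mp h
        exact hB2 y hadj.symm hcu.symm hby
    have htri : G.dist v u ≤ G.dist v y + G.dist y u := hconn.dist_triangle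
    refine ⟨u, ⟨huM, hunm⟩, hcu.trans hcy, by omega⟩
  have hlt : (M \ {m}).ncard < M.ncard :=
    Set.ncard_diff_singleton_lt_of_mem hmM (Set.toFinite M)
  have hcon := hmin _ hsel'
  omega
end
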